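/- In the nodewise regression setup applied to the transformed design X̃ = B^{1/2}X, where X ∈ ℝ^{n×p} and B ∈ ℝ^{n×n} is symmetric with 0 ≼ B ≼ I, and with all τ̂_j² > 0, for every j ∈ {1,…,p} the row w_{j·} = e_jᵀΘ̂XᵀB of the matrix Θ̂XᵀB satisfies ‖w_{j·}‖₂² ≤ n/τ̂_j², i.e. e_jᵀΘ̂XᵀB²XΘ̂ᵀe_j ≤ n/τ̂_j². -/

import Mathlib

/-!
Write `c` for the `j`-th row of `Ĉ`, so that `Θ̂_{j·} = c / τ̂_j²` and `w_{j·} = B X c / τ̂_j²`.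
With `S = B^{1/2}` the vector `r = S X c = X̃ c` is exactly the nodewise residual, so `B X c = S r`
and `‖B X c‖² = rᵀ B r ≤ ‖r‖²` because `B ≼ I`. Finally `‖r‖² ≤ n τ̂_j²`, since the penalty term in
`τ̂_j²` is nonnegative; hence `‖w_{j·}‖² ≤ n τ̂_j² / τ̂_j⁴ = n / τ̂_j²`.
-/

open Finset Matrix
open scoped MatrixOrder

namespace Matrix

variable {ι m n R : Type*}

theorem PosSemidef.sqrt_eq_eigenvectorUnitary_mul_diagonal [Fintype n] [DecidableEq n]
    {B : Matrix n n ℝ} (hB : B.PosSemidef) :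
    CFC.sqrt B = hB.1.eigenvectorUnitary.1 *
      diagonal ((RCLike.ofReal : ℝ → ℝ) ∘ Real.sqrt ∘ hB.1.eigenvalues) *
      (star hB.1.eigenvectorUnitary : Matrix n n ℝ) := by
  rw [CFC.sqrt_eq_real_sqrt B hB.nonneg, cfcₙ_eq_cfc, hB.1.cfc_eq, IsHermitian.cfc,
    Unitary.conjStarAlgAut_apply]

theorem dotProduct_mulVec_le_dotProduct_self_of_posSemidef_one_sub [Fintype n] [DecidableEq n]
    {B : Matrix n n ℝ} (hIB : (1 - B).PosSemidef) (r : n → ℝ) : r ⬝ᵥ (B *ᵥ r) ≤ r ⬝ᵥ r := by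
  have h := hIB.dotProduct_mulVec_nonneg r
  rw [star_trivial, sub_mulVec, one_mulVec, dotProduct_sub] at h
  linarith

theorem PosSemidef.dotProduct_mulVec_self_le_sqrt [Fintype n] [DecidableEq n] {B : Matrix n n ℝ}
    (hB : B.PosSemidef) (hIB : (1 - B).PosSemidef) (v : n → ℝ) :
    (B *ᵥ v) ⬝ᵥ (B *ᵥ v) ≤ (CFC.sqrt B *ᵥ v) ⬝ᵥ (CFC.sqrt B *ᵥ v) := by
  set S := CFC.sqrt B
  have hSS : S * S = B := CFC.sqrt_mul_sqrt_self B hB.nonneg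
  have hS : Sᵀ = S := by
    rw [← conjTranspose_eq_transpose_of_trivial]
    exact CFC.sqrt_nonneg B |>.isSelfAdjoint
  calc (B *ᵥ v) ⬝ᵥ (B *ᵥ v) = (S *ᵥ v) ⬝ᵥ (B *ᵥ (S *ᵥ v)) := by
        rw [← hSS, ← mulVec_mulVec, dotProduct_mulVec, ← mulVec_transpose, hS, mulVec_mulVec,
          dotProduct_comm]
    _ ≤ (S *ᵥ v) ⬝ᵥ (S *ᵥ v) :=
        dotProduct_mulVec_le_dotProduct_self_of_posSemidef_one_sub hIB _

/-- The `j`-th row of `Ĉ`, built from the nodewise coefficients `θ = θ̂_j`. -/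
def nodewiseRow [Ring R] [DecidableEq ι] (j : ι) (θ : {k : ι // k ≠ j} → R) : ι → R :=
  fun k => if h : k = j then 1 else -θ ⟨k, h⟩

theorem mulVec_nodewiseRow [Fintype ι] [DecidableEq ι] [Ring R] (A : Matrix m ι R) (j : ι)
    (θ : {k : ι // k ≠ j} → R) (i : m) :
    (A *ᵥ nodewiseRow j θ) i = A i j - ∑ k, A i k.1 * θ k := by
  rw [mulVec, dotProduct, Fintype.sum_eq_add_sum_subtype_ne _ j, sub_eq_add_neg,
    ← sum_neg_distrib]
  congr 1
  · simp [nodewiseRow]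
  · exact sum_congr rfl fun k _ => by rw [nodewiseRow, dif_neg k.2, mul_neg]

theorem mul_transpose_mul_apply_of_transpose_eq [Fintype m] [Fintype n] [CommSemiring R]
    (Θ : Matrix ι n R) (X : Matrix m n R) {B : Matrix m m R} (hB : Bᵀ = B) (j : ι) :
    (Θ * Xᵀ * B) j = B *ᵥ (X *ᵥ Θ j) := by
  rw [mul_apply_eq_vecMul, mul_apply_eq_vecMul, vecMul_transpose, ← mulVec_transpose, hB]

end Matrix

theorem sum_sq_le_mul_of_eq_one_div_mul_add {n : ℕ} (r : Fin n → ℝ) {τ t : ℝ}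
    (hτ : τ = 1 / n * ∑ i, r i ^ 2 + t) (ht : 0 ≤ t) : ∑ i, r i ^ 2 ≤ n * τ := by
  rcases n.eq_zero_or_pos with rfl | hn
  · simp
  · rw [hτ, mul_add, ← mul_assoc, mul_one_div_cancel (by positivity), one_mul]
    linarith [mul_nonneg (Nat.cast_nonneg n : (0 : ℝ) ≤ n) ht]

theorem stmt_12_general (n p : ℕ)
    (X : Matrix (Fin n) (Fin p) ℝ)
    (B : Matrix (Fin n) (Fin n) ℝ) (hB : B.PosSemidef)
    (hIB : ((1 : Matrix (Fin n) (Fin n) ℝ) - B).PosSemidef)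
    (lam : Fin p → ℝ) (hlam : ∀ j, 0 < lam j)
    (Xt : Matrix (Fin n) (Fin p) ℝ) (hXt : Xt = (hB.1.eigenvectorUnitary.1 *
      diagonal ((RCLike.ofReal : ℝ → ℝ) ∘ Real.sqrt ∘ hB.1.eigenvalues) *
      (star hB.1.eigenvectorUnitary : Matrix (Fin n) (Fin n) ℝ)) * X)
    (θhat : ∀ j : Fin p, {k : Fin p // k ≠ j} → ℝ)
    (tau2 : Fin p → ℝ)
    (htau : ∀ j, tau2 j =
      (1 / (n : ℝ)) * ∑ i, (Xt i j - ∑ k, Xt i k.1 * θhat j k) ^ 2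
          + lam j * ∑ k, |θhat j k|)
    (Theta : Matrix (Fin p) (Fin p) ℝ)
    (hTheta : ∀ j k, Theta j k =
      (if h : k = j then (1 : ℝ) else -(θhat j ⟨k, h⟩)) / tau2 j)
    (W : Matrix (Fin p) (Fin n) ℝ) (hW : W = Theta * Xᵀ * B) :
    ∀ j : Fin p, ∑ i, (W j i) ^ 2 ≤ (n : ℝ) / tau2 j := by
  intro j
  rw [← hB.sqrt_eq_eigenvectorUnitary_mul_diagonal] at hXt
  set c := nodewiseRow j (θhat j)
  have hrow : Theta j = (tau2 j)⁻¹ • c := funext fun k => by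
    rw [hTheta, div_eq_inv_mul]; rfl
  have hBsymm : Bᵀ = B := by rw [← conjTranspose_eq_transpose_of_trivial]; exact hB.1
  have hWj : W j = (tau2 j)⁻¹ • (B *ᵥ (X *ᵥ c)) := by
    rw [hW, mul_transpose_mul_apply_of_transpose_eq _ _ hBsymm, hrow, mulVec_smul, mulVec_smul]
  have hres : (CFC.sqrt B *ᵥ (X *ᵥ c)) ⬝ᵥ (CFC.sqrt B *ᵥ (X *ᵥ c)) ≤ n * tau2 j := by
    have hpen : 0 ≤ lam j * ∑ k, |θhat j k| :=
      mul_nonneg (hlam j).le (sum_nonneg fun k _ => abs_nonneg _)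
    rw [mulVec_mulVec, ← hXt, funext (mulVec_nodewiseRow Xt j (θhat j))]
    simpa only [dotProduct, ← sq] using
      sum_sq_le_mul_of_eq_one_div_mul_add _ (htau j) hpen
  calc ∑ i, W j i ^ 2 = (tau2 j)⁻¹ ^ 2 * ((B *ᵥ (X *ᵥ c)) ⬝ᵥ (B *ᵥ (X *ᵥ c))) := by
        simp only [hWj, dotProduct, mul_sum, Pi.smul_apply, smul_eq_mul]
        exact sum_congr rfl fun i _ => by ring
    _ ≤ (tau2 j)⁻¹ ^ 2 * (n * tau2 j) := by
        gcongr
        exact (hB.dotProduct_mulVec_self_le_sqrt hIB _).trans hres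
    _ = n / tau2 j := by grind

theorem stmt_12 (n p : ℕ) (hn : 0 < n) (hp : 2 ≤ p)
    (X : Matrix (Fin n) (Fin p) ℝ)
    (B : Matrix (Fin n) (Fin n) ℝ) (hB : B.PosSemidef)
    (hIB : ((1 : Matrix (Fin n) (Fin n) ℝ) - B).PosSemidef)
    (lam : Fin p → ℝ) (hlam : ∀ j, 0 < lam j)
    (Xt : Matrix (Fin n) (Fin p) ℝ) (hXt : Xt = (hB.1.eigenvectorUnitary.1 *
      diagonal ((RCLike.ofReal : ℝ → ℝ) ∘ Real.sqrt ∘ hB.1.eigenvalues) *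
      (star hB.1.eigenvectorUnitary : Matrix (Fin n) (Fin n) ℝ)) * X)
    (θhat : ∀ j : Fin p, {k : Fin p // k ≠ j} → ℝ)
    (hmin : ∀ j : Fin p, ∀ θ : {k : Fin p // k ≠ j} → ℝ,
      (1 / (2 * (n : ℝ))) * ∑ i, (Xt i j - ∑ k, Xt i k.1 * θhat j k) ^ 2
          + lam j * ∑ k, |θhat j k| ≤
      (1 / (2 * (n : ℝ))) * ∑ i, (Xt i j - ∑ k, Xt i k.1 * θ k) ^ 2
          + lam j * ∑ k, |θ k|)
    (tau2 : Fin p → ℝ)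
    (htau : ∀ j, tau2 j =
      (1 / (n : ℝ)) * ∑ i, (Xt i j - ∑ k, Xt i k.1 * θhat j k) ^ 2
          + lam j * ∑ k, |θhat j k|)
    (htaupos : ∀ j, 0 < tau2 j)
    (Theta : Matrix (Fin p) (Fin p) ℝ)
    (hTheta : ∀ j k, Theta j k =
      (if h : k = j then (1 : ℝ) else -(θhat j ⟨k, h⟩)) / tau2 j)
    (W : Matrix (Fin p) (Fin n) ℝ) (hW : W = Theta * Xᵀ * B) :
    ∀ j : Fin p, ∑ i, (W j i) ^ 2 ≤ (n : ℝ) / tau2 j :=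
  stmt_12_general n p X B hB hIB lam hlam Xt hXt θhat tau2 htau Theta hTheta W hW
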